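/- Let Q be a symmetric positive definite n×n real matrix with eigenvalues 0 < λᵢ ≤ L = maxᵢ λᵢ, and let 0 < α < 1/L. Then for f(x) = (1/2)xᵀQx, the Grad-Avg iterates x_{t+1} = (I - αQ + (α²/2)Q²)x_t converge to 0 as t → ∞ for any starting point x₀. -/

import Mathlib

/-!
On an orthonormal eigenbasis of `Q` the Grad-Avg step acts diagonally, multiplying the `i`-th
coordinate by `p(αλᵢ)` with `p(s) = 1 - s + s²/2 = ((1 - s)² + 1) / 2`. Since `0 < αλᵢ < 1`, each
factor lies in `(0, 1)`, so every coordinate of the iterates decays geometrically.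
-/

open Filter Topology

theorem abs_one_sub_add_sq_div_two_lt_one {s : ℝ} (hs₀ : 0 < s) (hs₂ : s < 2) :
    |1 - s + s ^ 2 / 2| < 1 := by
  rw [abs_lt]
  constructor <;> nlinarith [sq_nonneg (1 - s)]

theorem Module.End.tendsto_pow_apply_nhds_zero_of_basis {𝕜 E ι : Type*} [NormedField 𝕜]
    [AddCommGroup E] [Module 𝕜 E] [TopologicalSpace E] [ContinuousAdd E] [ContinuousSMul 𝕜 E]
    [Fintype ι] {f : Module.End 𝕜 E} (b : Module.Basis ι 𝕜 E) (c : ι → 𝕜)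
    (hb : ∀ i, f (b i) = c i • b i) (hc : ∀ i, ‖c i‖ < 1) (v : E) :
    Tendsto (fun t : ℕ => (f ^ t) v) atTop (𝓝 0) := by
  have hpow : ∀ t i, (f ^ t) (b i) = c i ^ t • b i := by
    intro t i
    induction t with
    | zero => simp
    | succ t ih => rw [pow_succ', Module.End.mul_apply, ih, map_smul, hb, smul_smul, pow_succ]
  have hexpand : ∀ t, (f ^ t) v = ∑ i, (b.repr v i * c i ^ t) • b i := by
    intro t
    conv_lhs => rw [← b.sum_repr v]
    simp only [map_sum, map_smul, hpow, smul_smul]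
  simpa [hexpand] using tendsto_finsetSum Finset.univ fun i _ =>
    ((tendsto_pow_atTop_nhds_zero_of_norm_lt_one (hc i)).const_mul (b.repr v i)).smul_const (b i)

def gradAvgStep {K M : Type*} [Field K] [AddCommGroup M] [Module K M] (α : K)
    (A : Module.End K M) : Module.End K M :=
  1 - α • A + (α ^ 2 / 2) • (A * A)

theorem gradAvgStep_apply_of_apply_eq_smul {K M : Type*} [Field K] [AddCommGroup M]
    [Module K M] {A : Module.End K M} {v : M} {μ : K} (hv : A v = μ • v) (α : K) :
    gradAvgStep α A v = (1 - α * μ + (α * μ) ^ 2 / 2) • v := by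
  simp only [gradAvgStep, LinearMap.add_apply, LinearMap.sub_apply, LinearMap.smul_apply,
    Module.End.one_apply, Module.End.mul_apply, hv, map_smul, smul_smul]
  module

theorem Matrix.IsHermitian.toEuclideanLin_eigenvectorBasis {𝕜 n : Type*} [RCLike 𝕜] [Fintype n]
    [DecidableEq n] {A : Matrix n n 𝕜} (hA : A.IsHermitian) (j : n) :
    Matrix.toEuclideanLin A (hA.eigenvectorBasis j) =
      hA.eigenvalues j • hA.eigenvectorBasis j := by
  ext i
  simpa [Matrix.toLpLin_apply] using congrFun (hA.mulVec_eigenvectorBasis j) i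

theorem grad_avg_quadratic_converges_to_zero_general {n : ℕ} [NeZero n]
    (Q : Matrix (Fin n) (Fin n) ℝ) (hQ : Q.PosDef) (L : ℝ)
    (hLdef : L = Finset.univ.sup' Finset.univ_nonempty fun i => hQ.1.eigenvalues i)
    (α : ℝ) (hα : 0 < α) (hα' : α < 1 / L)
    (x : ℕ → EuclideanSpace ℝ (Fin n))
    (hrec : ∀ t, x (t + 1) = x t - α • Matrix.toEuclideanLin Q (x t)
      + (α ^ 2 / 2) • Matrix.toEuclideanLin Q (Matrix.toEuclideanLin Q (x t))) :
    Filter.Tendsto x Filter.atTop (nhds 0) := by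
  set μ := hQ.1.eigenvalues
  have hx : x = fun t => (gradAvgStep α (Matrix.toEuclideanLin Q) ^ t) (x 0) := by
    funext t
    induction t with
    | zero => rfl
    | succ t ih => rw [hrec, ih, pow_succ' (gradAvgStep _ _), Module.End.mul_apply]; rfl
  have hαμ : ∀ i, α * μ i < 1 := fun i => by
    have hμL : μ i ≤ L := hLdef ▸ Finset.le_sup' _ (Finset.mem_univ i)
    have hL : 0 < L := (hQ.eigenvalues_pos i).trans_le hμL
    calc α * μ i ≤ α * L := by gcongr
      _ < 1 := (lt_div_iff₀ hL).1 hα'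
  rw [hx]
  refine Module.End.tendsto_pow_apply_nhds_zero_of_basis hQ.1.eigenvectorBasis.toBasis
    (fun i => 1 - α * μ i + (α * μ i) ^ 2 / 2) (fun i => ?_) (fun i => ?_) (x 0)
  · rw [OrthonormalBasis.coe_toBasis]
    exact gradAvgStep_apply_of_apply_eq_smul (hQ.1.toEuclideanLin_eigenvectorBasis i) α
  · have hαμ_pos : 0 < α * μ i := mul_pos hα (hQ.eigenvalues_pos i)
    exact abs_one_sub_add_sq_div_two_lt_one hαμ_pos (by linarith [hαμ i])

theorem grad_avg_quadratic_converges_to_zero {n : ℕ} [NeZero n]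
    (Q : Matrix (Fin n) (Fin n) ℝ) (hQ : Q.PosDef) (L : ℝ)
    (hLdef : L = Finset.univ.sup' Finset.univ_nonempty fun i => hQ.1.eigenvalues i)
    (α : ℝ) (hα : 0 < α) (hα' : α < 1 / L)
    (x₀ : EuclideanSpace ℝ (Fin n)) (x : ℕ → EuclideanSpace ℝ (Fin n))
    (hx0 : x 0 = x₀)
    (hrec : ∀ t, x (t + 1) = x t - α • Matrix.toEuclideanLin Q (x t)
      + (α ^ 2 / 2) • Matrix.toEuclideanLin Q (Matrix.toEuclideanLin Q (x t))) :
    Filter.Tendsto x Filter.atTop (nhds 0) :=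
  grad_avg_quadratic_converges_to_zero_general Q hQ L hLdef α hα hα' x hrec
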